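/- arXiv:2004.13692 — 4 statements merged into one kernel-verified Lean document; each statement's English description precedes it below -/
import Mathlib

section
/- Let P ⊆ (0,1] be a set such that the set of all finite products of elements of P that are ≥ ε is finite for every ε > 0. Fix λ ∈ (0,1] and k ∈ ℕ. Then there exists ε_k ∈ (0,λ] such that for every multiset S of at most k finite products of elements of P, if the sum of S is < λ then the sum of S is < λ − ε_k. -/
private lemma stmt_3_aux (P : Set ℝ) (hP : P ⊆ Set.Ioc (0:ℝ) 1)
    (hfin : ∀ ε > (0:ℝ),
      {x : ℝ | ε ≤ x ∧ ∃ m : Multiset ℝ, (∀ p ∈ m, p ∈ P) ∧ m.prod = x}.Finite) :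
    ∀ k : ℕ, ∀ lam : ℝ, 0 < lam →
      ∃ ε, 0 < ε ∧ ε ≤ lam ∧ ∀ S : Multiset ℝ, Multiset.card S ≤ k →
        (∀ x ∈ S, ∃ m : Multiset ℝ, (∀ p ∈ m, p ∈ P) ∧ m.prod = x) →
        S.sum < lam → S.sum < lam - ε := by
  have hprodpos : ∀ x : ℝ, (∃ m : Multiset ℝ, (∀ p ∈ m, p ∈ P) ∧ m.prod = x) → 0 < x := by
    rintro x ⟨m, hm, rfl⟩
    exact Multiset.prod_pos (fun p hp => (hP (hm p hp)).1)
  intro k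
  induction k with
  | zero =>
    intro lam hlam
    refine ⟨lam / 2, by linarith, by linarith, fun S hcard hS hsum => ?_⟩
    have : S = 0 := Multiset.card_eq_zero.mp (Nat.le_zero.mp hcard)
    simp [this]
    linarith
  | succ k ih =>
    intro lam hlam
    set δ : ℝ := lam / (4 * (k + 1)) with hδ
    have hδpos : 0 < δ := by positivity
    have hF := hfin δ hδpos
    set T : Finset ℝ := hF.toFinset.filter (· < lam) with hT
    set f : ℝ → ℝ := fun p => if h : 0 < lam - p then (ih (lam - p) h).choose else 1 with hf
    have hne : (insert (1:ℝ) (T.image f)).Nonempty := ⟨1, Finset.mem_insert_self _ _⟩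
    set ε : ℝ := min (lam / 2) ((insert (1:ℝ) (T.image f)).min' hne) with hε
    have hfpos : ∀ y ∈ insert (1:ℝ) (T.image f), 0 < y := by
      intro y hy
      rcases Finset.mem_insert.mp hy with rfl | hy
      · norm_num
      · rcases Finset.mem_image.mp hy with ⟨p, hp, rfl⟩
        have hplam : p < lam := (Finset.mem_filter.mp hp).2
        have h : 0 < lam - p := by linarith
        rw [hf]
        simp only [dif_pos h]
        exact (ih (lam - p) h).choose_spec.1
    have hεpos : 0 < ε := lt_min (by linarith) (hfpos _ (Finset.min'_mem _ hne))
    refine ⟨ε, hεpos, le_trans (min_le_left _ _) (by linarith), fun S hcard hS hsum => ?_⟩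
    have hεhalf : ε ≤ lam / 2 := min_le_left _ _
    by_cases hbig : ∃ p ∈ S, δ ≤ p
    · rcases hbig with ⟨p, hpS, hpδ⟩
      rcases Multiset.exists_cons_of_mem hpS with ⟨S', rfl⟩
      have hS'sum : 0 ≤ S'.sum :=
        Multiset.sum_nonneg (fun x hx => le_of_lt (hprodpos x (hS x (Multiset.mem_cons_of_mem hx))))
      have hsum' : p + S'.sum = (p ::ₘ S').sum := (Multiset.sum_cons p S').symm
      have hplam : p < lam := by
        have := hsum
        rw [Multiset.sum_cons] at this
        linarith
      have hpT : p ∈ T := by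
        rw [hT, Finset.mem_filter]
        refine ⟨hF.mem_toFinset.mpr ⟨hpδ, hS p (Multiset.mem_cons_self p S')⟩, hplam⟩
      have h : 0 < lam - p := by linarith
      have hspec := (ih (lam - p) h).choose_spec
      have hεle : ε ≤ f p :=
        le_trans (min_le_right _ _)
          (Finset.min'_le _ _ (Finset.mem_insert_of_mem (Finset.mem_image_of_mem f hpT)))
      have hfp : f p = (ih (lam - p) h).choose := by rw [hf]; simp only [dif_pos h]
      have hS'card : Multiset.card S' ≤ k := by
        have := hcard
        rw [Multiset.card_cons] at this
        omega
      have hS'prods : ∀ x ∈ S', ∃ m : Multiset ℝ, (∀ p ∈ m, p ∈ P) ∧ m.prod = x :=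
        fun x hx => hS x (Multiset.mem_cons_of_mem hx)
      have hS'lt : S'.sum < lam - p := by
        have := hsum
        rw [Multiset.sum_cons] at this
        linarith
      have := hspec.2.2 S' hS'card hS'prods hS'lt
      rw [Multiset.sum_cons]
      rw [← hfp] at this
      linarith
    · push_neg at hbig
      have hle : S.sum ≤ (Multiset.card S) • δ :=
        Multiset.sum_le_card_nsmul S δ (fun x hx => le_of_lt (hbig x hx))
      have : ((Multiset.card S) : ℝ) * δ ≤ ((k : ℝ) + 1) * δ := by
        apply mul_le_mul_of_nonneg_right _ (le_of_lt hδpos)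
        exact_mod_cast hcard
      have hq : ((k : ℝ) + 1) * δ = lam / 4 := by
        rw [hδ]; field_simp
      have : S.sum ≤ lam / 4 := by
        rw [nsmul_eq_mul] at hle
        linarith
      linarith

/-- If every set of finite products (of elements of `P ⊆ (0,1]`) above a
positive threshold is finite, then for `λ ∈ (0,1]` and `k ∈ ℕ` there is a uniform gap
`ε_k ∈ (0,λ]`: any sum of at most `k` such products which is `< λ` is `< λ − ε_k`. -/
theorem stmt_3 (P : Set ℝ) (hP : P ⊆ Set.Ioc (0:ℝ) 1)
    (hfin : ∀ ε > (0:ℝ),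
      {x : ℝ | ε ≤ x ∧ ∃ m : Multiset ℝ, (∀ p ∈ m, p ∈ P) ∧ m.prod = x}.Finite)
    (lam : ℝ) (hlam : lam ∈ Set.Ioc (0:ℝ) 1) (k : ℕ) :
    ∃ ε ∈ Set.Ioc (0:ℝ) lam, ∀ S : Multiset ℝ, Multiset.card S ≤ k →
      (∀ x ∈ S, ∃ m : Multiset ℝ, (∀ p ∈ m, p ∈ P) ∧ m.prod = x) →
      S.sum < lam → S.sum < lam - ε := by
  obtain ⟨ε, h1, h2, h3⟩ := stmt_3_aux P hP hfin k lam hlam.1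
  exact ⟨ε, ⟨h1, h2⟩, h3⟩
end

section
/- For every word w ∈ {a,b}*, the PWA of Figure 2(a) accepts w $^ω with probability exactly (1/2)·(1 − (1/2)^{#_a(w)} + (1/2)^{#_b(w)}), where #_x(w) is the number of occurrences of x in w. In particular this probability is > 1/2 if and only if #_a(w) > #_b(w). -/
/-- One step of the PWA of Figure 2(a) on the sub-alphabet `{a,b}` (`true` = `a`,
`false` = `b`), acting on the probability masses `(x, y, z)` of the states
`(q_a, q_b, q_+)`.  On `a`: half of the mass at `q_a` moves to `q_+`; on `b`: half of
the mass at `q_b` is lost to the rejecting sink. -/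
noncomputable def pwaStep (s : ℝ × ℝ × ℝ) (c : Bool) : ℝ × ℝ × ℝ :=
  match c, s with
  | true,  (x, y, z) => (x / 2, y, z + x / 2)
  | false, (x, y, z) => (x, y / 2, z)

@[simp]
lemma pwaStep_true (x y z : ℝ) : pwaStep (x, y, z) true = (x / 2, y, z + x / 2) := rfl

@[simp]
lemma pwaStep_false (x y z : ℝ) : pwaStep (x, y, z) false = (x, y / 2, z) := rfl

lemma foldl_pwaStep (w : List Bool) (x y z : ℝ) :
    w.foldl pwaStep (x, y, z) =
      (x * (1 / 2) ^ w.count true, y * (1 / 2) ^ w.count false,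
        z + x * (1 - (1 / 2) ^ w.count true)) := by
  induction w generalizing x y z with
  | nil => simp
  | cons c w ih =>
    cases c
    · rw [List.foldl_cons, pwaStep_false, ih, List.count_cons_self,
        List.count_cons_of_ne (by decide), pow_succ]
      refine Prod.ext ?_ (Prod.ext ?_ ?_) <;> ring
    · rw [List.foldl_cons, pwaStep_true, ih, List.count_cons_self,
        List.count_cons_of_ne (by decide), pow_succ]
      refine Prod.ext ?_ (Prod.ext ?_ ?_) <;> ring

/-- starting from initial masses `(1/2, 1/2, 0)`, after reading `w` the
acceptance probability of `w·$^ω` (the mass at `q_b` plus the mass at `q_+`, the only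
states from which `$^ω` is accepted, each surely) equals
`(1/2)·(1 − (1/2)^{#_a(w)} + (1/2)^{#_b(w)})`, and this exceeds `1/2` iff
`#_a(w) > #_b(w)`. -/
theorem stmt_8 (w : List Bool) :
    ((w.foldl pwaStep (1/2, 1/2, 0)).2.1 + (w.foldl pwaStep (1/2, 1/2, 0)).2.2
        = (1/2) * (1 - (1/2) ^ (w.count true) + (1/2) ^ (w.count false))) ∧
    ((w.foldl pwaStep (1/2, 1/2, 0)).2.1 + (w.foldl pwaStep (1/2, 1/2, 0)).2.2 > 1/2
        ↔ w.count true > w.count false) := by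
  have hacc : (w.foldl pwaStep (1/2, 1/2, 0)).2.1 + (w.foldl pwaStep (1/2, 1/2, 0)).2.2
      = (1/2) * (1 - (1/2) ^ (w.count true) + (1/2) ^ (w.count false)) := by
    rw [foldl_pwaStep]
    ring
  refine ⟨hacc, ?_⟩
  rw [hacc, gt_iff_lt, gt_iff_lt,
    ← pow_lt_pow_iff_right_of_lt_one₀ (by norm_num : (0 : ℝ) < 1 / 2) (by norm_num)]
  constructor <;> intro h <;> linarith
end

section
/- Let A be a PBA and w a word on which A has only finitely many accepting runs. Then Pr(accepting runs on w) = 1 if and only if every run of A on w is accepting and limit-deterministic. -/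
open MeasureTheory
open scoped ENNReal

/-- `ρ` is a run of the PBA (with transition probabilities `δ`, initial distribution
`μ0`) on the word `w`: all its steps have positive probability. -/
def IsRunP {Q A : Type*} (δ : Q → A → Q → ℝ≥0∞) (μ0 : Q → ℝ≥0∞)
    (w : ℕ → A) (ρ : ℕ → Q) : Prop :=
  μ0 (ρ 0) ≠ 0 ∧ ∀ n, δ (ρ n) (w n) (ρ (n+1)) ≠ 0

/-- Büchi acceptance: accepting states are visited infinitely often. -/
def AcceptingP {Q : Type*} (F : Set Q) (ρ : ℕ → Q) : Prop :=
  ∀ N, ∃ n ≥ N, ρ n ∈ F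

/-- `ρ` is limit-deterministic: from some point on it only uses transitions of
probability 1 (i.e. only finitely many branching transitions). -/
def LimitDetP {Q A : Type*} (δ : Q → A → Q → ℝ≥0∞) (w : ℕ → A) (ρ : ℕ → Q) : Prop :=
  ∃ N, ∀ n ≥ N, δ (ρ n) (w n) (ρ (n+1)) = 1

/-!
Almost every path of the run measure is a run, since the paths with a null prefix cylinder form
a countable union of null cylinders. Hence the accepting runs have probability one iff every
run is accepting. If instead the finitely many accepting runs have full measure, a run
lies in the support, i.e. all its prefix cylinders have positive measure, so each of them meets
the accepting runs; past a time `t` separating the accepting runs this forces the run itself to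
be accepting. Past `t` the run cannot branch either: a positive-probability transition off the
run would open a cylinder of positive measure that contains no accepting run.
-/

open PiNat Function

theorem Fintype.exists_ne_ne_zero_of_sum_ne {ι M : Type*} [Fintype ι] [AddCommMonoid M]
    {f : ι → M} {i : ι} (h : ∑ j, f j ≠ f i) : ∃ j ≠ i, f j ≠ 0 := by
  contrapose! h
  exact Fintype.sum_eq_single i h

theorem Set.Finite.exists_eq_of_mem_cylinder {E : ℕ → Type*} {S : Set (∀ n, E n)}
    (hS : S.Finite) : ∃ t, ∀ x ∈ S, ∀ y ∈ S, y ∈ cylinder x t → y = x := by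
  obtain ⟨N, hN⟩ := ((hS.prod hS).image fun p => firstDiff p.1 p.2).bddAbove
  refine ⟨N + 1, fun x hx y hy hyx => by_contra fun hne => ?_⟩
  have hle : firstDiff y x ≤ N := hN ⟨(y, x), ⟨hy, hx⟩, rfl⟩
  have := (mem_cylinder_iff_le_firstDiff hne _).1 hyx
  omega

namespace PiNat

theorem cylinder_succ {E : ℕ → Type*} (x : ∀ n, E n) (n : ℕ) :
    cylinder x (n + 1) = {y | ∀ i ≤ n, y i = x i} := by
  simp only [cylinder, Nat.lt_succ_iff]

variable {α : Type*} [MeasurableSpace α]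

theorem measure_setOf_measure_cylinder_eq_zero [Countable α] (μ : Measure (ℕ → α)) (n : ℕ) :
    μ {x | μ (cylinder x n) = 0} = 0 := by
  set B := {x | μ (cylinder x n) = 0}
  -- countably many cylinders of length `n`, indexed by the lists `res x n`, cover `B`
  have hcover : B ⊆ ⋃ l ∈ (res · n) '' B, {y | res y n = l} := fun x hx =>
    Set.mem_biUnion (Set.mem_image_of_mem _ hx) rfl
  refine measure_mono_null hcover ((measure_biUnion_null_iff (Set.to_countable _)).2 ?_)
  rintro _ ⟨x, hx, rfl⟩
  rwa [← cylinder_eq_res]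

theorem ae_forall_measure_cylinder_ne_zero [Countable α] (μ : Measure (ℕ → α)) :
    ∀ᵐ x ∂μ, ∀ n, μ (cylinder x n) ≠ 0 :=
  ae_all_iff.2 fun n => by
    simpa only [ae_iff, not_not] using measure_setOf_measure_cylinder_eq_zero μ n

variable {μ : Measure (ℕ → α)} {S : Set (ℕ → α)}

theorem mem_of_ae_mem_of_measure_cylinder_ne_zero (hSfin : S.Finite) (hS : ∀ᵐ x ∂μ, x ∈ S)
    {x : ℕ → α} (hx : ∀ n, μ (cylinder x n) ≠ 0) : x ∈ S := by
  obtain ⟨t, ht⟩ := (hSfin.insert x).exists_eq_of_mem_cylinder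
  obtain ⟨y, hyx, hyS⟩ :=
    Measure.exists_mem_of_measure_ne_zero_of_ae (hx t) (ae_restrict_of_ae hS)
  rwa [ht x (Set.mem_insert x S) y (Set.mem_insert_of_mem x hyS) hyx] at hyS

theorem apply_eq_of_ae_mem (hS : ∀ᵐ x ∂μ, x ∈ S) {t : ℕ}
    (ht : ∀ x ∈ S, ∀ y ∈ S, y ∈ cylinder x t → y = x) {x y : ℕ → α} {n : ℕ} (hx : x ∈ S)
    (hn : t ≤ n) (hy : y ∈ cylinder x n) (hμy : μ (cylinder y (n + 1)) ≠ 0) : y n = x n := by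
  obtain ⟨z, hzy, hzS⟩ := Measure.exists_mem_of_measure_ne_zero_of_ae hμy (ae_restrict_of_ae hS)
  have hzx : z ∈ cylinder x t :=
    cylinder_anti x hn (mem_cylinder_iff_eq.1 hy ▸ cylinder_anti y n.le_succ hzy)
  rw [← hzy n n.lt_succ_self, ht x hx z hzS hzx]

end PiNat

section RunMeasure

variable {Q A : Type*} [MeasurableSpace Q] {δ : Q → A → Q → ℝ≥0∞} {μ0 : Q → ℝ≥0∞} {w : ℕ → A}
  {μ : Measure (ℕ → Q)}

/-- The cylinder `cylinder qs (n + 1)` fixes the `n + 1` states `qs 0, …, qs n`. -/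
def IsRunMeasure (δ : Q → A → Q → ℝ≥0∞) (μ0 : Q → ℝ≥0∞) (w : ℕ → A) (μ : Measure (ℕ → Q)) :
    Prop :=
  ∀ (n : ℕ) (qs : ℕ → Q),
    μ (cylinder qs (n + 1)) = μ0 (qs 0) * ∏ i ∈ Finset.range n, δ (qs i) (w i) (qs (i + 1))

theorem measure_cylinder_succ_ne_zero_iff
    (hμ : IsRunMeasure δ μ0 w μ) (ρ : ℕ → Q) (n : ℕ) :
    μ (cylinder ρ (n + 1)) ≠ 0 ↔ μ0 (ρ 0) ≠ 0 ∧ ∀ i < n, δ (ρ i) (w i) (ρ (i + 1)) ≠ 0 := by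
  rw [hμ]
  simp only [ne_eq, mul_eq_zero, Finset.prod_eq_zero_iff, Finset.mem_range, not_or,
    not_exists, not_and]

theorem isRunP_iff_forall_measure_cylinder_ne_zero [NeZero μ]
    (hμ : IsRunMeasure δ μ0 w μ) (ρ : ℕ → Q) :
    IsRunP δ μ0 w ρ ↔ ∀ n, μ (cylinder ρ n) ≠ 0 := by
  constructor
  · rintro ⟨h0, hstep⟩ (_ | n)
    · simpa using NeZero.ne μ
    · exact (measure_cylinder_succ_ne_zero_iff hμ ρ n).2 ⟨h0, fun i _ => hstep i⟩
  · intro h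
    refine ⟨((measure_cylinder_succ_ne_zero_iff hμ ρ 0).1 (h 1)).1, fun i => ?_⟩
    exact ((measure_cylinder_succ_ne_zero_iff hμ ρ (i + 1)).1 (h (i + 2))).2 i i.lt_succ_self

theorem measure_cylinder_update_ne_zero (hμ : IsRunMeasure δ μ0 w μ)
    {ρ : ℕ → Q} (hρ : IsRunP δ μ0 w ρ) {n : ℕ} {q : Q} (hq : δ (ρ n) (w n) q ≠ 0) :
    μ (cylinder (update ρ (n + 1) q) (n + 2)) ≠ 0 := by
  refine (measure_cylinder_succ_ne_zero_iff hμ _ (n + 1)).2 ⟨by simpa using hρ.1, fun i hi => ?_⟩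
  rcases Nat.lt_succ_iff_lt_or_eq.1 hi with hi | rfl
  · rw [update_of_ne (by omega), update_of_ne (by omega)]
    exact hρ.2 i
  · simpa using hq

theorem ae_isRunP [Countable Q] [NeZero μ] (hμ : IsRunMeasure δ μ0 w μ) :
    ∀ᵐ ρ ∂μ, IsRunP δ μ0 w ρ := by
  filter_upwards [ae_forall_measure_cylinder_ne_zero μ] with ρ hρ
  exact (isRunP_iff_forall_measure_cylinder_ne_zero hμ ρ).2 hρ

theorem limitDetP_of_ae_mem [Fintype Q] (hδ : ∀ p a, ∑ q, δ p a q = 1)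
    (hμ : IsRunMeasure δ μ0 w μ) {S : Set (ℕ → Q)} (hSfin : S.Finite) (hS : ∀ᵐ ρ ∂μ, ρ ∈ S)
    {ρ : ℕ → Q} (hρS : ρ ∈ S) (hρ : IsRunP δ μ0 w ρ) : LimitDetP δ w ρ := by
  obtain ⟨t, ht⟩ := hSfin.exists_eq_of_mem_cylinder
  refine ⟨t, fun n hn => by_contra fun hne => ?_⟩
  obtain ⟨q, hq, hδq⟩ :=
    Fintype.exists_ne_ne_zero_of_sum_ne ((hδ (ρ n) (w n)).trans_ne (Ne.symm hne))
  have hbranch := apply_eq_of_ae_mem hS ht hρS (hn.trans n.le_succ)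
    (update_mem_cylinder ρ (n + 1) q) (measure_cylinder_update_ne_zero hμ hρ hδq)
  exact hq (by simpa using hbranch)

end RunMeasure

theorem stmt_14_general {Q A : Type*} [Fintype Q] [MeasurableSpace Q] [MeasurableSingletonClass Q]
    (δ : Q → A → Q → ℝ≥0∞) (μ0 : Q → ℝ≥0∞) (F : Set Q)
    (hδ : ∀ p a, ∑ q, δ p a q = 1)
    (w : ℕ → A)
    (μ : MeasureTheory.Measure (ℕ → Q)) [MeasureTheory.IsProbabilityMeasure μ]
    (hcyl : ∀ (n : ℕ) (qs : ℕ → Q),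
      μ {ρ | ∀ i ≤ n, ρ i = qs i} =
        μ0 (qs 0) * ∏ i ∈ Finset.range n, δ (qs i) (w i) (qs (i+1)))
    (hfin : {ρ : ℕ → Q | IsRunP δ μ0 w ρ ∧ AcceptingP F ρ}.Finite) :
    μ {ρ : ℕ → Q | IsRunP δ μ0 w ρ ∧ AcceptingP F ρ} = 1 ↔
      ∀ ρ : ℕ → Q, IsRunP δ μ0 w ρ → (AcceptingP F ρ ∧ LimitDetP δ w ρ) := by
  have hμ : IsRunMeasure δ μ0 w μ := fun n qs => by rw [cylinder_succ]; exact hcyl n qs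
  rw [← measure_univ (μ := μ), ← ae_mem_iff_measure_eq hfin.measurableSet.nullMeasurableSet]
  constructor
  · intro hS ρ hρ
    have hρS : ρ ∈ {ρ | IsRunP δ μ0 w ρ ∧ AcceptingP F ρ} :=
      mem_of_ae_mem_of_measure_cylinder_ne_zero hfin hS
        ((isRunP_iff_forall_measure_cylinder_ne_zero hμ ρ).1 hρ)
    exact ⟨hρS.2, limitDetP_of_ae_mem hδ hμ hfin hS hρS hρ⟩
  · intro hall
    filter_upwards [ae_isRunP hμ] with ρ hρ using ⟨hρ, (hall ρ hρ).1⟩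

/-- if a PBA has only finitely many accepting runs on `w`, then the
accepting runs on `w` have probability 1 iff every run on `w` is accepting and
limit-deterministic. -/
theorem stmt_14 {Q A : Type*} [Fintype Q] [MeasurableSpace Q] [MeasurableSingletonClass Q]
    (δ : Q → A → Q → ℝ≥0∞) (μ0 : Q → ℝ≥0∞) (F : Set Q)
    (hδ : ∀ p a, ∑ q, δ p a q = 1) (hμ0 : ∑ q, μ0 q = 1)
    (w : ℕ → A)
    (μ : MeasureTheory.Measure (ℕ → Q)) [MeasureTheory.IsProbabilityMeasure μ]
    (hcyl : ∀ (n : ℕ) (qs : ℕ → Q),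
      μ {ρ | ∀ i ≤ n, ρ i = qs i} =
        μ0 (qs 0) * ∏ i ∈ Finset.range n, δ (qs i) (w i) (qs (i+1)))
    (hfin : {ρ : ℕ → Q | IsRunP δ μ0 w ρ ∧ AcceptingP F ρ}.Finite) :
    μ {ρ : ℕ → Q | IsRunP δ μ0 w ρ ∧ AcceptingP F ρ} = 1 ↔
      ∀ ρ : ℕ → Q, IsRunP δ μ0 w ρ → (AcceptingP F ρ ∧ LimitDetP δ w ρ) :=
  stmt_14_general δ μ0 F hδ w μ hcyl hfin
end

section
/- Let L ⊆ Σ^ω be an ω-language such that both L and its complement are countable intersections of open sets (i.e., L ∈ Π₂ ∩ Σ₂ in the Borel hierarchy over Σ^ω with the product topology of the discrete topology on Σ), and such that the Myhill–Nerode relation ∼_L on finite words has finitely many equivalence classes. Then L is recognizable by a deterministic weak Büchi automaton. -/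
/-- The infinite word `u · x`. -/
def appendWord {A : Type*} (u : List A) (x : ℕ → A) : ℕ → A :=
  fun n => if h : n < u.length then u.get ⟨n, h⟩ else x (n - u.length)

/-- The state trace of a complete deterministic automaton on an infinite word. -/
def traceD {Q A : Type*} (step : Q → A → Q) (q0 : Q) (w : ℕ → A) : ℕ → Q
  | 0 => q0
  | m + 1 => step (traceD step q0 w m) (w m)

/-- Reachability in a deterministic automaton. -/
def ReachD {Q A : Type*} (step : Q → A → Q) : Q → Q → Prop :=
  Relation.ReflTransGen (fun p q => ∃ a, step p a = q)

namespace St17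
variable {A : Type*}

def pre (m : ℕ) (w : ℕ → A) : List A := List.ofFn (fun i : Fin m => w i)

@[simp] lemma length_pre (m : ℕ) (w : ℕ → A) : (pre m w).length = m := by simp [pre]

@[simp] lemma pre_zero (w : ℕ → A) : pre 0 w = [] := by simp [pre]

lemma appendWord_lt {u : List A} (x : ℕ → A) {i : ℕ} (h : i < u.length) :
    appendWord u x i = u[i] := by
  show dite _ _ _ = _
  rw [dif_pos h]; rfl

lemma appendWord_ge {u : List A} (x : ℕ → A) {i : ℕ} (h : u.length ≤ i) :
    appendWord u x i = x (i - u.length) := by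
  show dite _ _ _ = _
  rw [dif_neg (by omega)]

lemma appendWord_nil (x : ℕ → A) : appendWord ([] : List A) x = x := by
  funext i; rw [appendWord_ge x (by simp)]; simp

lemma appendWord_append (u v : List A) (x : ℕ → A) :
    appendWord (u ++ v) x = appendWord u (appendWord v x) := by
  funext i
  rcases lt_or_ge i u.length with h | h
  · rw [appendWord_lt x (by simp; omega), appendWord_lt _ h]
    exact List.getElem_append_left h
  rcases lt_or_ge i (u.length + v.length) with h2 | h2
  · rw [appendWord_lt x (by simp; omega), appendWord_ge _ h,
      appendWord_lt x (by omega)]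
    rw [List.getElem_append_right] <;> omega
  · rw [appendWord_ge x (by simp; omega), appendWord_ge _ h, appendWord_ge x (by omega)]
    congr 1; simp; omega

lemma pre_add (m s : ℕ) (w : ℕ → A) :
    pre (m + s) w = pre m w ++ List.ofFn (fun i : Fin s => w (m + i)) := by
  apply List.ext_getElem (by simp)
  intro i h1 h2
  rcases lt_or_ge i m with h | h
  · rw [List.getElem_append_left (by simpa using h)]
    simp [pre]
  · rw [List.getElem_append_right (by simpa using h)]
    simp [pre]; congr 1; omega

lemma pre_succ (m : ℕ) (w : ℕ → A) : pre (m + 1) w = pre m w ++ [w m] := by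
  rw [pre_add]; simp

lemma appendWord_pre (m : ℕ) (w : ℕ → A) :
    appendWord (pre m w) (fun k => w (m + k)) = w := by
  funext i
  rcases lt_or_ge i m with h | h
  · rw [appendWord_lt _ (by simp [h])]; simp [pre]
  · rw [appendWord_ge _ (by simp [h])]; simp; congr 1; omega

lemma pre_appendWord (u : List A) (x : ℕ → A) (k : ℕ) :
    pre (u.length + k) (appendWord u x) = u ++ pre k x := by
  apply List.ext_getElem (by simp)
  intro i h1 h2
  simp only [pre, List.getElem_ofFn]
  rcases lt_or_ge i u.length with h | h
  · rw [List.getElem_append_left h, appendWord_lt _ h]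
  · rw [List.getElem_append_right h, appendWord_ge _ h]
    simp [pre]

lemma agree_cyl (u : List A) (x z : ℕ → A) (t : ℕ) {i : ℕ} (h : i < u.length + t) :
    appendWord (u ++ pre t x) z i = appendWord u x i := by
  rcases lt_or_ge i u.length with h1 | h1
  · rw [appendWord_lt _ (by simp; omega), appendWord_lt _ h1]
    exact List.getElem_append_left h1
  · rw [appendWord_lt _ (by simp; omega), appendWord_ge _ h1]
    rw [List.getElem_append_right h1]
    simp [pre]

lemma appendWord_shift {v : List A} {z : ℕ → A} (d : A)
    (hv : ∀ m, m < v.length → z m = v.getD m d) (u : List A) :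
    appendWord u z = appendWord (u ++ v) (fun k => z (v.length + k)) := by
  funext i
  rcases lt_or_ge i u.length with h | h
  · rw [appendWord_lt _ h, appendWord_lt _ (by simp; omega)]
    exact (List.getElem_append_left h).symm
  rcases lt_or_ge i (u.length + v.length) with h2 | h2
  · rw [appendWord_ge _ h, appendWord_lt _ (by simp; omega)]
    rw [List.getElem_append_right h]
    rw [hv _ (by omega), List.getD_eq_getElem _ _ (by omega)]
  · rw [appendWord_ge _ h, appendWord_ge _ (by simp; omega)]
    congr 1; simp; omega


lemma open_cyl [TopologicalSpace A] [DiscreteTopology A] {U : Set (ℕ → A)}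
    (hU : IsOpen U) {x : ℕ → A} (hx : x ∈ U) :
    ∃ m, ∀ y : ℕ → A, (∀ i < m, y i = x i) → y ∈ U := by
  obtain ⟨I, u, hu, hsub⟩ := isOpen_pi_iff.mp hU x hx
  refine ⟨(I.sup id) + 1, fun y hy => hsub ?_⟩
  intro i hi
  rw [hy i (by have := Finset.le_sup (f := id) hi; simp at this; omega)]
  exact (hu i hi).2

lemma io_iff (P : ℕ → Prop) : (∀ N, ∃ m, N ≤ m ∧ P m) ↔ {m | P m}.Infinite := by
  constructor
  · intro h
    intro hfin
    obtain ⟨b, hb⟩ := hfin.bddAbove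
    obtain ⟨m, hm, hPm⟩ := h (b + 1)
    exact absurd (hb hPm) (by omega)
  · intro h N
    by_contra hc
    push_neg at hc
    exact h (Set.Finite.subset (Set.finite_Iio N) (fun m hm => by
      by_contra hge
      exact hc m (by simpa using hge) hm))

lemma pigeon {Q : Type*} [Finite Q] (f : ℕ → Q) {T : Set ℕ} (hT : T.Infinite) :
    ∃ q, {m | m ∈ T ∧ f m = q}.Infinite := by
  by_contra hc
  push_neg at hc
  have : T = ⋃ q, {m | m ∈ T ∧ f m = q} := by
    ext m; simp only [Set.mem_iUnion, Set.mem_setOf_eq]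
    exact ⟨fun h => ⟨f m, h, rfl⟩, fun ⟨q, h, _⟩ => h⟩
  exact hT (this ▸ Set.finite_iUnion hc)

lemma exists_chain {α : Type*} (P : ℕ → α → Prop) (R : α → α → Prop) (a : α)
    (h0 : P 0 a) (hs : ∀ n x, P n x → ∃ y, R x y ∧ P (n + 1) y) :
    ∃ g : ℕ → α, g 0 = a ∧ (∀ n, P n (g n)) ∧ ∀ n, R (g n) (g (n + 1)) := by
  let f : ∀ n, {x // P n x} := fun n =>
    Nat.rec ⟨a, h0⟩ (fun n p => ⟨(hs n p.1 p.2).choose, (hs n p.1 p.2).choose_spec.2⟩) n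
  exact ⟨fun n => (f n).1, rfl, fun n => (f n).2, fun n => (hs n (f n).1 (f n).2).choose_spec.1⟩

section MN

variable (L : Set (ℕ → A))

def E (u v : List A) : Prop := ∀ x, appendWord u x ∈ L ↔ appendWord v x ∈ L

def sE : Setoid (List A) :=
  ⟨E L, fun _ _ => Iff.rfl, fun h x => (h x).symm, fun h1 h2 x => (h1 x).trans (h2 x)⟩

def Qc := Quotient (sE L)

def mk (u : List A) : Qc L := Quotient.mk (sE L) u

lemma E_append_right {u v : List A} (h : E L u v) (s : List A) : E L (u ++ s) (v ++ s) := by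
  intro x
  rw [appendWord_append, appendWord_append]
  exact h _

def dstar (q : Qc L) (v : List A) : Qc L :=
  Quotient.liftOn q (fun u => mk L (u ++ v))
    (fun _ _ h => Quotient.sound (E_append_right L h v))

@[simp] lemma dstar_mk (u v : List A) : dstar L (mk L u) v = mk L (u ++ v) := rfl

@[simp] lemma mk_out (q : Qc L) : mk L (Quotient.out q) = q := Quotient.out_eq q

@[simp] lemma dstar_nil (q : Qc L) : dstar L q [] = q := by
  induction q using Quotient.inductionOn with
  | _ u => show mk L (u ++ []) = mk L u; rw [List.append_nil]

lemma dstar_append (q : Qc L) (v w : List A) :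
    dstar L q (v ++ w) = dstar L (dstar L q v) w := by
  induction q using Quotient.inductionOn with
  | _ u => show mk L (u ++ (v ++ w)) = mk L ((u ++ v) ++ w); rw [List.append_assoc]

lemma dstar_out (q : Qc L) (v : List A) : dstar L q v = mk L (Quotient.out q ++ v) := by
  conv_lhs => rw [← mk_out L q]
  rfl

lemma mk_exact {u v : List A} (h : mk L u = mk L v) : E L u v := Quotient.exact h


lemma mk_congr_append {u v : List A} (h : mk L u = mk L v) (s : List A) :
    mk L (u ++ s) = mk L (v ++ s) := by
  have := congrArg (fun q => dstar L q s) h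
  simpa using this

lemma getD_append_lt {l l' : List A} {m : ℕ} (d : A) (h : m < l.length) :
    (l ++ l').getD m d = l.getD m d := by
  rw [List.getD_eq_getElem _ _ (by simp; omega), List.getD_eq_getElem _ _ h]
  exact List.getElem_append_left h

def LRec (M : Set (ℕ → A)) (q : Qc L) : Prop :=
  ∃ x, appendWord (Quotient.out q) x ∈ M ∧ ∀ N, ∃ t, N ≤ t ∧ dstar L q (pre t x) = q

lemma tail_rec {M : Set (ℕ → A)}
    (hM : ∀ u v, E L u v → ∀ x, (appendWord u x ∈ M ↔ appendWord v x ∈ M))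
    {w : ℕ → A} {q : Qc L} (hw : w ∈ M)
    (hvis : ∀ N, ∃ m, N ≤ m ∧ mk L (pre m w) = q) : LRec L M q := by
  obtain ⟨n0, -, hn0⟩ := hvis 0
  have hE : E L (Quotient.out q) (pre n0 w) := mk_exact L (by rw [hn0, mk_out])
  refine ⟨fun k => w (n0 + k), ?_, ?_⟩
  · rw [hM _ _ hE, appendWord_pre]
    exact hw
  · intro N
    obtain ⟨m, hm, hq⟩ := hvis (n0 + N)
    refine ⟨m - n0, by omega, ?_⟩
    rw [dstar_out]
    rw [mk_congr_append L (by rw [hn0, mk_out]) (pre (m - n0) (fun k => w (n0 + k)))]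
    have hpre : pre m w = pre n0 w ++ pre (m - n0) (fun k => w (n0 + k)) := by
      have h2 := pre_add n0 (m - n0) w
      rw [show n0 + (m - n0) = m by omega] at h2
      exact h2
    rw [← hpre, hq]

section Topo

variable [TopologicalSpace A] [DiscreteTopology A]

lemma extend_cyl {q : Qc L} {x : ℕ → A} {V : Set (ℕ → A)}
    (hV : IsOpen V) {v : List A}
    (hmem : appendWord (Quotient.out q ++ v) x ∈ V)
    (hxr : ∀ N, ∃ t, N ≤ t ∧ dstar L q (pre t x) = q)
    (hv : dstar L q v = q) :
    ∃ t, 1 ≤ t ∧ dstar L q (v ++ pre t x) = q ∧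
      ∀ z, appendWord (Quotient.out q ++ (v ++ pre t x)) z ∈ V := by
  obtain ⟨m, hm⟩ := open_cyl hV hmem
  obtain ⟨t, ht, hret⟩ := hxr (m + 1)
  refine ⟨t, by omega, ?_, ?_⟩
  · rw [dstar_append, hv, hret]
  · intro z
    rw [show Quotient.out q ++ (v ++ pre t x) = (Quotient.out q ++ v) ++ pre t x by
      rw [List.append_assoc]]
    exact hm _ (fun i hi => agree_cyl _ x z t (by omega))

variable [Inhabited A]

lemma not_both {U U' : ℕ → Set (ℕ → A)}
    (hU : ∀ n, IsOpen (U n)) (hU' : ∀ n, IsOpen (U' n))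
    (hLU : L = ⋂ n, U n) (hLU' : Lᶜ = ⋂ n, U' n) (q : Qc L) :
    ¬(LRec L L q ∧ LRec L Lᶜ q) := by
  rintro ⟨⟨x, hx, hxr⟩, ⟨y, hy, hyr⟩⟩
  set r := Quotient.out q with hr
  have hsat : ∀ v, dstar L q v = q → ∀ z, (appendWord (r ++ v) z ∈ L ↔ appendWord r z ∈ L) := by
    intro v hv z
    have hE : E L (r ++ v) r := mk_exact L (by
      rw [show mk L (r ++ v) = dstar L q v from (dstar_out L q v).symm, hv]
      exact (mk_out L q).symm)
    exact hE z
  set P : ℕ → List A → Prop := fun n v => dstar L q v = q ∧ n ≤ v.length ∧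
    ∀ i < n, (∀ z, appendWord (r ++ v) z ∈ U i) ∧ (∀ z, appendWord (r ++ v) z ∈ U' i) with hP
  have h0 : P 0 [] := ⟨dstar_nil L q, le_refl _, fun i hi => absurd hi (by omega)⟩
  have hstep : ∀ n v, P n v → ∃ v', (v <+: v') ∧ P (n + 1) v' := by
    rintro n v ⟨hv, hlen, hinv⟩
    have hx' : appendWord (r ++ v) x ∈ U n := by
      have hmem : appendWord (r ++ v) x ∈ L := (hsat v hv x).mpr hx
      rw [hLU] at hmem
      exact Set.mem_iInter.mp hmem n
    obtain ⟨t, ht1, hret1, hcyl1⟩ := extend_cyl L (hU n) hx' hxr hv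
    have hy' : appendWord (r ++ (v ++ pre t x)) y ∈ U' n := by
      have hmem : appendWord (r ++ (v ++ pre t x)) y ∈ Lᶜ := by
        intro hc
        exact hy ((hsat _ hret1 y).mp hc)
      rw [hLU'] at hmem
      exact Set.mem_iInter.mp hmem n
    obtain ⟨s, hs1, hret2, hcyl2⟩ := extend_cyl L (hU' n) hy' hyr hret1
    refine ⟨(v ++ pre t x) ++ pre s y, ⟨pre t x ++ pre s y, by rw [List.append_assoc]⟩, hret2,
      by simp; omega, ?_⟩
    intro i hi
    rcases Nat.lt_or_ge i n with hin | hin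
    · refine ⟨fun z => ?_, fun z => ?_⟩
      · have h' := (hinv i hin).1 (appendWord (pre t x) (appendWord (pre s y) z))
        simpa [appendWord_append, List.append_assoc] using h'
      · have h' := (hinv i hin).2 (appendWord (pre t x) (appendWord (pre s y) z))
        simpa [appendWord_append, List.append_assoc] using h'
    · have hin' : i = n := by omega
      subst hin'
      refine ⟨fun z => ?_, fun z => ?_⟩
      · have h' := hcyl1 (appendWord (pre s y) z)
        simpa [appendWord_append, List.append_assoc] using h'
      · have h' := hcyl2 z
        simpa [appendWord_append, List.append_assoc] using h'
  obtain ⟨g, hg0, hgP, hgR⟩ := exists_chain P (· <+: ·) [] h0 hstep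
  have hmono : ∀ a b, a ≤ b → g a <+: g b := by
    intro a b hab
    induction b, hab using Nat.le_induction with
    | base => exact List.prefix_refl _
    | succ b hab ih => exact ih.trans (hgR b)
  set zω : ℕ → A := fun m => (g (m + 1)).getD m default with hzw
  have hz : ∀ n m, m < (g n).length → zω m = (g n).getD m default := by
    intro n m hm
    rcases le_total n (m + 1) with h | h
    · obtain ⟨w, hw⟩ := hmono n (m + 1) h
      show (g (m + 1)).getD m default = _
      rw [← hw, getD_append_lt _ hm]
    · obtain ⟨w, hw⟩ := hmono (m + 1) n h
      have hlen : m < (g (m + 1)).length := lt_of_lt_of_le (Nat.lt_succ_self m) (hgP (m + 1)).2.1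
      show (g (m + 1)).getD m default = _
      rw [← hw, getD_append_lt _ hlen]
  have hWmem : ∀ n, (appendWord r zω ∈ U n) ∧ (appendWord r zω ∈ U' n) := by
    intro n
    have hsh := appendWord_shift (v := g (n + 1)) (z := zω) default (hz (n + 1)) r
    constructor
    · rw [hsh]
      exact ((hgP (n + 1)).2.2 n (Nat.lt_succ_self n)).1 _
    · rw [hsh]
      exact ((hgP (n + 1)).2.2 n (Nat.lt_succ_self n)).2 _
  have hin : appendWord r zω ∈ L := by
    rw [hLU]
    exact Set.mem_iInter.mpr (fun n => (hWmem n).1)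
  have hout : appendWord r zω ∈ Lᶜ := by
    rw [hLU']
    exact Set.mem_iInter.mpr (fun n => (hWmem n).2)
  exact hout hin

lemma weak_step {U U' : ℕ → Set (ℕ → A)}
    (hU : ∀ n, IsOpen (U n)) (hU' : ∀ n, IsOpen (U' n))
    (hLU : L = ⋂ n, U n) (hLU' : Lᶜ = ⋂ n, U' n)
    {p q' : Qc L} {v₁ v₂ : List A}
    (hp : LRec L L p) (h1 : dstar L p v₁ = q') (h2 : dstar L q' v₂ = p) :
    LRec L L q' := by
  by_cases hB0 : v₂ ++ v₁ = []
  · have hv1 : v₁ = [] := (List.append_eq_nil_iff.mp hB0).2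
    rw [hv1, dstar_nil] at h1
    rwa [← h1]
  set B := v₂ ++ v₁ with hBdef
  have hBlen : 1 ≤ B.length := by
    rcases Nat.eq_zero_or_pos B.length with h | h
    · exact absurd (List.length_eq_zero_iff.mp h) hB0
    · exact h
  set Y : ℕ → A := fun m => B.getD (m % B.length) default with hY
  have hseg : ∀ (k c : ℕ), c ≤ B.length →
      (List.ofFn fun i : Fin c => Y (k * B.length + i)) = B.take c := by
    intro k c hc
    apply List.ext_getElem (by simp; omega)
    intro i h1' h2'
    simp only [List.getElem_ofFn, List.getElem_take]
    have hi : i < c := by simpa using h1'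
    show B.getD ((k * B.length + i) % B.length) default = _
    rw [Nat.mul_comm, Nat.mul_add_mod, Nat.mod_eq_of_lt (by omega), List.getD_eq_getElem _ _ (by omega)]
  have hq'B : dstar L q' B = q' := by
    rw [hBdef, dstar_append, h2, h1]
  have hvis_q : ∀ k, dstar L q' (pre (k * B.length) Y) = q' := by
    intro k
    induction k with
    | zero => simp
    | succ k ih =>
      have hp' : pre ((k + 1) * B.length) Y = pre (k * B.length) Y ++ B := by
        rw [show (k + 1) * B.length = k * B.length + B.length by ring, pre_add]
        congr 1
        simpa using hseg k B.length le_rfl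
      rw [hp', dstar_append, ih, hq'B]
  have hvis_p : ∀ k, dstar L q' (pre (k * B.length + v₂.length) Y) = p := by
    intro k
    rw [pre_add, dstar_append, hvis_q]
    have hv2 : (List.ofFn fun i : Fin v₂.length => Y (k * B.length + i)) = v₂ := by
      rw [hseg k v₂.length (by simp [hBdef])]
      simp [hBdef]
    rw [hv2, h2]
  set W := appendWord (Quotient.out q') Y with hW
  have htr : ∀ k, mk L (pre ((Quotient.out q').length + k) W) = dstar L q' (pre k Y) := by
    intro k
    rw [hW, pre_appendWord, dstar_out]
  have hsatL : ∀ u v, E L u v → ∀ x, (appendWord u x ∈ L ↔ appendWord v x ∈ L) :=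
    fun u v h => h
  by_cases hWL : W ∈ L
  · apply tail_rec L hsatL hWL
    intro N
    refine ⟨(Quotient.out q').length + N * B.length, ?_, ?_⟩
    · have := Nat.mul_le_mul_left N hBlen
      omega
    · rw [htr, hvis_q]
  · exfalso
    have hsatC : ∀ u v, E L u v → ∀ x, (appendWord u x ∈ Lᶜ ↔ appendWord v x ∈ Lᶜ) :=
      fun u v h x => not_congr (h x)
    have hrec : LRec L Lᶜ p := by
      apply tail_rec L hsatC hWL
      intro N
      refine ⟨(Quotient.out q').length + (N * B.length + v₂.length), ?_, ?_⟩
      · have := Nat.mul_le_mul_left N hBlen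
        omega
      · rw [htr, hvis_p]
    exact not_both L hU hU' hLU hLU' p ⟨hp, hrec⟩

end Topo

end MN

end St17


/-- Staiger: an ω-language `L` over `Σ^ω` (Cantor topology) that is both
`Π₂` and `Σ₂` and whose Myhill–Nerode relation has finitely many classes is recognized
by a deterministic weak Büchi automaton (a finite complete DBA whose accepting set is a
union of SCCs). -/
theorem stmt_17 {A : Type*} [TopologicalSpace A] [DiscreteTopology A]
    (L : Set (ℕ → A))
    (hPi : ∃ U : ℕ → Set (ℕ → A), (∀ n, IsOpen (U n)) ∧ L = ⋂ n, U n)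
    (hSigma : ∃ U : ℕ → Set (ℕ → A), (∀ n, IsOpen (U n)) ∧ Lᶜ = ⋂ n, U n)
    (hMN : ∃ S : Finset (List A), ∀ u : List A, ∃ v ∈ S,
      ∀ x : ℕ → A, appendWord u x ∈ L ↔ appendWord v x ∈ L) :
    ∃ (n : ℕ) (step : Fin n → A → Fin n) (q0 : Fin n) (F : Set (Fin n)),
      (∀ p q : Fin n, p ∈ F → ReachD step p q → ReachD step q p → q ∈ F) ∧
      L = {w : ℕ → A | ∀ N, ∃ m ≥ N, traceD step q0 w m ∈ F} := by
  classical
  obtain ⟨U, hU, hLU⟩ := hPi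
  obtain ⟨U', hU', hLU'⟩ := hSigma
  obtain ⟨S, hS⟩ := hMN
  rcases isEmpty_or_nonempty A with hA | hA
  · haveI hEw : IsEmpty (ℕ → A) := ⟨fun f => hA.false (f 0)⟩
    refine ⟨1, fun q _ => q, 0, ∅, fun p q hp _ _ => absurd hp (by simp), ?_⟩
    ext w
    exact (hEw.false w).elim
  haveI : Inhabited A := Classical.inhabited_of_nonempty hA
  haveI : Finite (St17.Qc L) := by
    apply Finite.of_surjective (fun s : {u // u ∈ S} => St17.mk L s.val)
    intro q
    induction q using Quotient.inductionOn with
    | _ u =>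
      obtain ⟨v, hv, hE⟩ := hS u
      exact ⟨⟨v, hv⟩, Quotient.sound (fun x => (hE x).symm)⟩
  haveI : Fintype (St17.Qc L) := Fintype.ofFinite _
  set e := Fintype.equivFin (St17.Qc L) with he
  refine ⟨Fintype.card (St17.Qc L), fun i a => e (St17.dstar L (e.symm i) [a]), e (St17.mk L []),
    {i | St17.LRec L L (e.symm i)}, ?_, ?_⟩
  · -- weakness
    have hreach : ∀ i j, ReachD (fun i a => e (St17.dstar L (e.symm i) [a])) i j →
        ∃ v, St17.dstar L (e.symm i) v = e.symm j := by
      intro i j h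
      induction h with
      | refl => exact ⟨[], St17.dstar_nil L _⟩
      | tail hab hbc ih =>
        obtain ⟨v, hv⟩ := ih
        obtain ⟨a, ha⟩ := hbc
        refine ⟨v ++ [a], ?_⟩
        rw [St17.dstar_append, hv, ← ha, Equiv.symm_apply_apply]
    intro p q hp hpq hqp
    obtain ⟨v₁, hv₁⟩ := hreach p q hpq
    obtain ⟨v₂, hv₂⟩ := hreach q p hqp
    exact St17.weak_step L hU hU' hLU hLU' hp hv₁ hv₂
  · -- acceptance
    have htr : ∀ (w : ℕ → A) (m : ℕ),
        traceD (fun i a => e (St17.dstar L (e.symm i) [a])) (e (St17.mk L [])) w m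
          = e (St17.mk L (St17.pre m w)) := by
      intro w m
      induction m with
      | zero => rw [St17.pre_zero]; rfl
      | succ m ih =>
        show e (St17.dstar L (e.symm (traceD _ _ w m)) [w m]) = _
        rw [ih, Equiv.symm_apply_apply, St17.dstar_mk, ← St17.pre_succ]
    ext w
    simp only [Set.mem_setOf_eq]
    constructor
    · intro hw
      obtain ⟨q, hq⟩ := St17.pigeon (fun m => St17.mk L (St17.pre m w))
        (Set.infinite_univ (α := ℕ))
      have hvis : ∀ N, ∃ m, N ≤ m ∧ St17.mk L (St17.pre m w) = q := by
        intro N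
        obtain ⟨m, hm, -, hf⟩ := (St17.io_iff _).mpr hq N
        exact ⟨m, hm, hf⟩
      have hrec : St17.LRec L L q := St17.tail_rec L (fun u v h => h) hw hvis
      intro N
      obtain ⟨m, hm, hfm⟩ := hvis N
      refine ⟨m, hm, ?_⟩
      show St17.LRec L L (e.symm (traceD _ _ w m))
      rw [htr w m, Equiv.symm_apply_apply, hfm]
      exact hrec
    · intro h
      by_contra hw
      have hT : {m | St17.LRec L L (St17.mk L (St17.pre m w))}.Infinite := by
        rw [← St17.io_iff]
        intro N
        obtain ⟨m, hm, hF⟩ := h N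
        refine ⟨m, hm, ?_⟩
        have hF' : St17.LRec L L (e.symm (traceD _ _ w m)) := hF
        rwa [htr w m, Equiv.symm_apply_apply] at hF'
      obtain ⟨q, hq⟩ := St17.pigeon (fun m => St17.mk L (St17.pre m w)) hT
      have hvisq : ∀ N, ∃ m, N ≤ m ∧ St17.mk L (St17.pre m w) = q := by
        intro N
        obtain ⟨m, hm, -, hf⟩ := (St17.io_iff _).mpr hq N
        exact ⟨m, hm, hf⟩
      have hqF : St17.LRec L L q := by
        obtain ⟨m, -, hmT, hf⟩ := (St17.io_iff _).mpr hq 0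
        have hmT' : St17.LRec L L (St17.mk L (St17.pre m w)) := hmT
        rwa [hf] at hmT'
      have hrecC : St17.LRec L Lᶜ q :=
        St17.tail_rec L (fun u v hE x => not_congr (hE x)) hw hvisq
      exact St17.not_both L hU hU' hLU hLU' q ⟨hqF, hrecC⟩
end
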